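/- Let f₁,…,f_N, g₁,…,g_N and f̃₁,…,f̃_Ñ, g̃₁,…,g̃_Ñ be real C¹ functions on [a,b] with absolutely continuous derivatives, satisfying fⱼ'' = (V + κⱼ²)fⱼ, gⱼ'' = (V + κⱼ²)gⱼ, f̃ⱼ'' = (V + κ̃ⱼ²)f̃ⱼ, g̃ⱼ'' = (V + κ̃ⱼ²)g̃ⱼ a.e. on [a,b], where V ∈ L¹[a,b] and κⱼ, κ̃ⱼ > 0. Suppose mⱼ, m̃ⱼ > 0 and that for every l = 0,1,…, the function x ↦ Σⱼ m̃ⱼ (κ̃ⱼ²)^l (f̃ⱼ g̃ⱼ)(x) − Σⱼ mⱼ (κⱼ²)^l (fⱼ gⱼ)(x) is constant Cₗ on [a,b] with Cₗ = 0. If there exists x' ∈ [a,b] with (fⱼ gⱼ)(x') ≠ 0 for all j ≤ N and (f̃ⱼ g̃ⱼ)(x') ≠ 0 for all j ≤ Ñ, and the κⱼ² are pairwise distinct and the κ̃ⱼ² are pairwise distinct, then N = Ñ and, after reordering, κⱼ = κ̃ⱼ and mⱼ (fⱼ gⱼ)(x') = m̃ⱼ (f̃ⱼ g̃ⱼ)(x')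 for all j. -/

import Mathlib

/-!
Put `cⱼ = mⱼ (fⱼ gⱼ)(x')` and `c̃ⱼ = m̃ⱼ (f̃ⱼ g̃ⱼ)(x')`, both nonzero. The hypothesis at `x'` says
that the finitely supported "spectral measures" `∑ cⱼ δ_{κⱼ²}` and `∑ c̃ⱼ δ_{κ̃ⱼ²}` have the same
moments of every order. A finitely supported measure whose moments all vanish is zero: pairing it
with the polynomial that vanishes on its support except at one atom isolates the mass of that atom.
Since the `κⱼ²` are distinct and the `cⱼ` nonzero, each measure has exactly the atoms `κⱼ²` with
masses `cⱼ`, which gives the matching; `κ > 0` recovers `κ` from `κ²`.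
-/

open Finsupp Polynomial

namespace Finsupp

section Moments

variable {R : Type*} [CommRing R]

theorem sum_mul_eval_eq_zero_of_sum_mul_pow_eq_zero {w : R →₀ R}
    (h : ∀ l : ℕ, (w.sum fun v c => c * v ^ l) = 0) (p : R[X]) :
    (w.sum fun v c => c * p.eval v) = 0 := by
  induction p using Polynomial.induction_on' with
  | add p q hp hq => simp only [eval_add, mul_add, sum_add, hp, hq, add_zero]
  | monomial n a => simp only [eval_monomial, mul_left_comm _ a, ← mul_sum, h, mul_zero]

theorem eq_zero_of_sum_mul_pow_eq_zero [IsDomain R] {w : R →₀ R}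
    (h : ∀ l : ℕ, (w.sum fun v c => c * v ^ l) = 0) : w = 0 := by
  classical
  ext v₀
  rw [coe_zero, Pi.zero_apply]
  by_contra hv₀
  let Q : R[X] := ∏ u ∈ w.support.erase v₀, (X - C u)
  have hQ : (w.sum fun v c => c * Q.eval v) = w v₀ * Q.eval v₀ := by
    refine sum_eq_single v₀ (fun v hv hne => ?_) fun _ => zero_mul _
    rw [eval_prod, Finset.prod_eq_zero (Finset.mem_erase.2 ⟨hne, mem_support_iff.2 hv⟩)
      (by simp), mul_zero]
  have hQv₀ : Q.eval v₀ ≠ 0 := by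
    rw [eval_prod, Finset.prod_ne_zero_iff]
    intro u hu
    simpa [sub_eq_zero] using (Finset.ne_of_mem_erase hu).symm
  exact mul_ne_zero hv₀ hQv₀ (hQ ▸ sum_mul_eval_eq_zero_of_sum_mul_pow_eq_zero h Q)

variable {ι ι' : Type*} [Fintype ι] [Fintype ι']

theorem sum_single_sum_mul_pow (μ c : ι → R) (l : ℕ) :
    ((∑ j, single (μ j) (c j)).sum fun v c => c * v ^ l) = ∑ j, c j * μ j ^ l := by
  rw [← sum_finsetSum_index (fun _ => zero_mul _) fun _ _ _ => add_mul _ _ _]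
  simp only [zero_mul, sum_single_index]

theorem sum_single_eq_of_sum_mul_pow_eq [IsDomain R] {μ c : ι → R} {μ' c' : ι' → R}
    (h : ∀ l : ℕ, ∑ j, c j * μ j ^ l = ∑ j, c' j * μ' j ^ l) :
    ∑ j, single (μ j) (c j) = ∑ j, single (μ' j) (c' j) := by
  rw [← sub_eq_zero]
  refine eq_zero_of_sum_mul_pow_eq_zero fun l => ?_
  rw [sum_sub_index fun _ _ _ => sub_mul _ _ _, sum_single_sum_mul_pow, sum_single_sum_mul_pow,
    h, sub_self]

end Moments

section Atoms

variable {α M ι ι' : Type*} [AddCommMonoid M] [Fintype ι] [Fintype ι']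

theorem sum_single_apply_of_injective {μ : ι → α} (hμ : μ.Injective) (c : ι → M) (i : ι) :
    (∑ j, single (μ j) (c j)) (μ i) = c i := by
  rw [finsetSum_apply, Finset.sum_eq_single i (fun j _ hj => single_eq_of_ne (hμ.ne hj).symm)
    (by simp), single_eq_same]

theorem sum_single_apply_eq_zero_of_notMem_range {μ : ι → α} (c : ι → M) {x : α}
    (hx : x ∉ Set.range μ) : (∑ j, single (μ j) (c j)) x = 0 := by
  rw [finsetSum_apply]
  exact Finset.sum_eq_zero fun j _ => single_eq_of_ne fun hj => hx ⟨j, hj.symm⟩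

theorem range_subset_range_of_sum_single_eq {μ : ι → α} {c : ι → M} {μ' : ι' → α} {c' : ι' → M}
    (hμ : μ.Injective) (hc : ∀ j, c j ≠ 0)
    (h : ∑ j, single (μ j) (c j) = ∑ j, single (μ' j) (c' j)) :
    Set.range μ ⊆ Set.range μ' := by
  rintro _ ⟨j, rfl⟩
  by_contra hj
  apply hc j
  rw [← sum_single_apply_of_injective hμ c j, h, sum_single_apply_eq_zero_of_notMem_range c' hj]

theorem exists_equiv_of_sum_single_eq {μ : ι → α} {c : ι → M} {μ' : ι' → α} {c' : ι' → M}
    (hμ : μ.Injective) (hμ' : μ'.Injective) (hc : ∀ j, c j ≠ 0) (hc' : ∀ j, c' j ≠ 0)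
    (h : ∑ j, single (μ j) (c j) = ∑ j, single (μ' j) (c' j)) :
    ∃ σ : ι ≃ ι', ∀ j, μ' (σ j) = μ j ∧ c' (σ j) = c j := by
  have hrange : Set.range μ = Set.range μ' :=
    (range_subset_range_of_sum_single_eq hμ hc h).antisymm
      (range_subset_range_of_sum_single_eq hμ' hc' h.symm)
  let σ : ι ≃ ι' :=
    (Equiv.ofInjective μ hμ).trans ((Equiv.setCongr hrange).trans (Equiv.ofInjective μ' hμ').symm)
  have hσ : ∀ j, μ' (σ j) = μ j := fun j => Equiv.apply_ofInjective_symm hμ' _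
  refine ⟨σ, fun j => ⟨hσ j, ?_⟩⟩
  rw [← sum_single_apply_of_injective hμ' c' (σ j), ← h, hσ j, sum_single_apply_of_injective hμ]

end Atoms

end Finsupp

theorem exists_equiv_of_sum_mul_pow_eq {R ι ι' : Type*} [CommRing R] [IsDomain R]
    [Fintype ι] [Fintype ι'] {μ c : ι → R} {μ' c' : ι' → R}
    (hμ : μ.Injective) (hμ' : μ'.Injective) (hc : ∀ j, c j ≠ 0) (hc' : ∀ j, c' j ≠ 0)
    (h : ∀ l : ℕ, ∑ j, c j * μ j ^ l = ∑ j, c' j * μ' j ^ l) :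
    ∃ σ : ι ≃ ι', ∀ j, μ' (σ j) = μ j ∧ c' (σ j) = c j :=
  Finsupp.exists_equiv_of_sum_single_eq hμ hμ' hc hc' (Finsupp.sum_single_eq_of_sum_mul_pow_eq h)

open MeasureTheory Set

theorem matching_of_families_general
    (a b : ℝ) (N Ntil : ℕ)
    (κ : Fin N → ℝ) (κt : Fin Ntil → ℝ)
    (m : Fin N → ℝ) (mt : Fin Ntil → ℝ)
    (f g : Fin N → ℝ → ℝ) (ft gt : Fin Ntil → ℝ → ℝ)
    (hκpos : ∀ j, 0 < κ j) (hκtpos : ∀ j, 0 < κt j)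
    (hmpos : ∀ j, 0 < m j) (hmtpos : ∀ j, 0 < mt j)
    (hvanish : ∀ l : ℕ, ∀ x ∈ Set.Icc a b,
      (∑ j : Fin Ntil, mt j * ((κt j) ^ 2) ^ l * (ft j x * gt j x)) -
      (∑ j : Fin N, m j * ((κ j) ^ 2) ^ l * (f j x * g j x)) = 0)
    (x' : ℝ) (hx' : x' ∈ Set.Icc a b)
    (hfg : ∀ j : Fin N, f j x' * g j x' ≠ 0)
    (hftgt : ∀ j : Fin Ntil, ft j x' * gt j x' ≠ 0)
    (hκinj : Function.Injective fun j => (κ j) ^ 2)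
    (hκtinj : Function.Injective fun j => (κt j) ^ 2) :
    N = Ntil ∧ ∃ σ : Fin N ≃ Fin Ntil, ∀ j : Fin N,
      κ j = κt (σ j) ∧
      m j * (f j x' * g j x') = mt (σ j) * (ft (σ j) x' * gt (σ j) x') := by
  have hmoments : ∀ l : ℕ, ∑ j, m j * (f j x' * g j x') * (κ j ^ 2) ^ l =
      ∑ j, mt j * (ft j x' * gt j x') * (κt j ^ 2) ^ l := by
    intro l
    rw [eq_comm, ← sub_eq_zero, ← hvanish l x' hx']
    congr 1 <;> exact Finset.sum_congr rfl fun j _ => mul_right_comm _ _ _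
  obtain ⟨σ, hσ⟩ := exists_equiv_of_sum_mul_pow_eq hκinj hκtinj
    (fun j => mul_ne_zero (hmpos j).ne' (hfg j)) (fun j => mul_ne_zero (hmtpos j).ne' (hftgt j))
    hmoments
  refine ⟨by simpa using Fintype.card_congr σ, σ, fun j => ⟨?_, (hσ j).2.symm⟩⟩
  exact ((pow_left_inj₀ (hκtpos _).le (hκpos j).le two_ne_zero).1 (hσ j).1).symm

/-- Step 2 of the main theorem: if all the weighted power-sum combinations of
two families of products of Sturm–Liouville solutions vanish identically on
`[a,b]`, and there is a common point where none of the products vanishes, then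
the two families match after reordering. -/
theorem matching_of_families
    (a b : ℝ) (hab : a ≤ b) (N Ntil : ℕ)
    (V : ℝ → ℝ) (hV : IntegrableOn V (Set.Icc a b))
    (κ : Fin N → ℝ) (κt : Fin Ntil → ℝ)
    (m : Fin N → ℝ) (mt : Fin Ntil → ℝ)
    (f g f' g' : Fin N → ℝ → ℝ) (ft gt ft' gt' : Fin Ntil → ℝ → ℝ)
    (hκpos : ∀ j, 0 < κ j) (hκtpos : ∀ j, 0 < κt j)
    (hmpos : ∀ j, 0 < m j) (hmtpos : ∀ j, 0 < mt j)
    (hfC1 : ∀ j, ∀ x ∈ Set.Icc a b, HasDerivAt (f j) (f' j x) x)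
    (hgC1 : ∀ j, ∀ x ∈ Set.Icc a b, HasDerivAt (g j) (g' j x) x)
    (hftC1 : ∀ j, ∀ x ∈ Set.Icc a b, HasDerivAt (ft j) (ft' j x) x)
    (hgtC1 : ∀ j, ∀ x ∈ Set.Icc a b, HasDerivAt (gt j) (gt' j x) x)
    (hf'' : ∀ j, ∀ᵐ x ∂(volume.restrict (Set.Icc a b)),
      HasDerivAt (f' j) ((V x + (κ j) ^ 2) * f j x) x)
    (hg'' : ∀ j, ∀ᵐ x ∂(volume.restrict (Set.Icc a b)),
      HasDerivAt (g' j) ((V x + (κ j) ^ 2) * g j x) x)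
    (hft'' : ∀ j, ∀ᵐ x ∂(volume.restrict (Set.Icc a b)),
      HasDerivAt (ft' j) ((V x + (κt j) ^ 2) * ft j x) x)
    (hgt'' : ∀ j, ∀ᵐ x ∂(volume.restrict (Set.Icc a b)),
      HasDerivAt (gt' j) ((V x + (κt j) ^ 2) * gt j x) x)
    (hvanish : ∀ l : ℕ, ∀ x ∈ Set.Icc a b,
      (∑ j : Fin Ntil, mt j * ((κt j) ^ 2) ^ l * (ft j x * gt j x)) -
      (∑ j : Fin N, m j * ((κ j) ^ 2) ^ l * (f j x * g j x)) = 0)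
    (x' : ℝ) (hx' : x' ∈ Set.Icc a b)
    (hfg : ∀ j : Fin N, f j x' * g j x' ≠ 0)
    (hftgt : ∀ j : Fin Ntil, ft j x' * gt j x' ≠ 0)
    (hκinj : Function.Injective fun j => (κ j) ^ 2)
    (hκtinj : Function.Injective fun j => (κt j) ^ 2) :
    N = Ntil ∧ ∃ σ : Fin N ≃ Fin Ntil, ∀ j : Fin N,
      κ j = κt (σ j) ∧
      m j * (f j x' * g j x') = mt (σ j) * (ft (σ j) x' * gt (σ j) x') :=
  matching_of_families_general a b N Ntil κ κt m mt f g ft gt hκpos hκtpos hmpos hmtpos hvanish x'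
    hx' hfg hftgt hκinj hκtinj
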